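/- Let c ∈ ℝ^{m×m}. Then the minimum of Σ_{i,r} c_{ir} w_{ir} over all (w,y) ∈ Q̄₁ equals the minimum of Σ_{i,r} c_{ir} w_{ir} over all w ∈ 𝒜ₙ (Problem LP̄₁ and Problem LAP have the same optimal objective value). -/

import Mathlib

/-- The assignment (Birkhoff) polytope `𝒜ₙ` (with `m = n - 1`): the set of
`m × m` doubly stochastic matrices.  Index `i : Fin m` stands for city `i+1`
(a city in `{1,…,m}`), index `r : Fin m` for stage/position `r+1`. -/
def assignmentPolytope (m : ℕ) : Set (Fin m → Fin m → ℝ) :=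
  {w | (∀ i, ∑ r, w i r = 1) ∧ (∀ r, ∑ i, w i r = 1) ∧ ∀ i r, 0 ≤ w i r}

/-- The polytope `Q̄₁`.  Cities are `Fin (m+1)` (city `0` is the depot, and
`i.succ : Fin (m+1)` is city `i+1` for `i : Fin m`).  The `y`-variables are
indexed by ordered pairs of distinct cities; the (nonexistent) diagonal
entries are pinned to `0`. -/
def Qbar1 (m : ℕ) :
    Set ((Fin m → Fin m → ℝ) × (Fin (m + 1) → Fin (m + 1) → ℝ)) :=
  {p |
    p.1 ∈ assignmentPolytope m ∧
    (∀ i, p.2 i i = 0) ∧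
    (∀ i r : Fin m, r.val = 0 → p.2 0 i.succ = p.1 i r) ∧
    (∀ i r : Fin m, r.val = m - 1 → p.2 i.succ 0 = p.1 i r) ∧
    (∀ i j r r' : Fin m, i ≠ j → r'.val = r.val + 1 →
      p.1 i r + p.1 j r' - p.2 i.succ j.succ ≤ 1) ∧
    (∑ i : Fin m, ∑ j : Fin m, if i = j then 0 else p.2 i.succ j.succ) = (m : ℝ) - 1 ∧
    (∀ i j, 0 ≤ p.2 i j)}

/-- The permutation matrix `ŵ` of a permutation `u` of `{1,…,m}`:
`ŵ_{ir} = 1` iff city `i+1` is visited at stage `r+1`, i.e. iff `i = u r`. -/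
def permMatrix (m : ℕ) (u : Equiv.Perm (Fin m)) : Fin m → Fin m → ℝ :=
  fun i r => if i = u r then 1 else 0

/-- The tour incidence vector `ȳ^u` of a permutation `u` of `{1,…,m}`:
`ȳ^u_{0,u(1)} = 1`, `ȳ^u_{u(m),0} = 1`, `ȳ^u_{u(q),u(q+1)} = 1` for
`q = 1,…,m−1`, and all other entries are `0`. -/
def tourVec (m : ℕ) (u : Equiv.Perm (Fin m)) : Fin (m + 1) → Fin (m + 1) → ℝ :=
  fun a b =>
    if (∃ r : Fin m, r.val = 0 ∧ a = 0 ∧ b = (u r).succ) ∨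
        (∃ r : Fin m, r.val = m - 1 ∧ a = (u r).succ ∧ b = 0) ∨
        (∃ q q' : Fin m, q'.val = q.val + 1 ∧ a = (u q).succ ∧ b = (u q').succ)
    then 1 else 0

/-- "The TSP polytope" `𝒫ₙ` (with `m = n - 1`): the convex hull of the tour
incidence vectors. -/
def tspPolytope (m : ℕ) : Set (Fin (m + 1) → Fin (m + 1) → ℝ) :=
  convexHull ℝ {y | ∃ u : Equiv.Perm (Fin m), y = tourVec m u}

/-- The cost `d(0,u(1)) + Σ_{q=1}^{m−1} d(u(q),u(q+1)) + d(u(m),0)` of the TSP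
tour `0 → u(1) → … → u(m) → 0` associated with a permutation `u` of `{1,…,m}`. -/
def tourCost (m : ℕ) (d : Fin (m + 1) → Fin (m + 1) → ℝ) (u : Equiv.Perm (Fin m)) : ℝ :=
  (∑ r : Fin m, if r.val = 0 then d 0 ((u r).succ) else 0) +
  (∑ q : Fin m, ∑ q' : Fin m, if q'.val = q.val + 1 then d ((u q).succ) ((u q').succ) else 0) +
  (∑ r : Fin m, if r.val = m - 1 then d ((u r).succ) 0 else 0)

/-!
A point `(w, y)` of `Q̄₁` has `w ∈ 𝒜ₙ`, so the optimum of `LP̄₁` is at least that of `LAP`.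
Conversely, by the Birkhoff–von Neumann theorem the linear objective attains its minimum over
`𝒜ₙ` at the permutation matrix `ŵ` of some permutation `u`, and `ŵ` extends to the point
`(ŵ, ȳ^u)` of `Q̄₁`, where `ȳ^u` is the incidence vector of the tour `0 → u(1) → ⋯ → u(m) → 0`.
-/

theorem IsMinOn.csInf_setOf_exists_eq {α β : Type*} [ConditionallyCompleteLinearOrder β]
    {f : α → β} {s : Set α} {a : α} (hf : IsMinOn f s a) (ha : a ∈ s) :
    sInf {v | ∃ x ∈ s, v = f x} = f a :=
  IsLeast.csInf_eq ⟨⟨a, ha, rfl⟩, by rintro _ ⟨x, hx, rfl⟩; exact isMinOn_iff.1 hf x hx⟩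

theorem isLinearMap_sum_sum_mul {R ι κ : Type*} [CommSemiring R] [Fintype ι] [Fintype κ]
    (c : ι → κ → R) : IsLinearMap R fun w : ι → κ → R => ∑ i, ∑ r, c i r * w i r where
  map_add x y := by simp only [Pi.add_apply, mul_add, Finset.sum_add_distrib]
  map_smul a x := by simp only [Pi.smul_apply, smul_eq_mul, Finset.mul_sum, mul_left_comm]

theorem ConcaveOn.exists_permMatrix_isMinOn {R n : Type*} [Fintype n] [DecidableEq n] [Field R]
    [LinearOrder R] [IsStrictOrderedRing R] {f : Matrix n n R → R}
    (hf : ConcaveOn R (doublyStochastic R n) f) :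
    ∃ σ : Equiv.Perm n, IsMinOn f (doublyStochastic R n) (σ.permMatrix R) := by
  obtain ⟨σ, hσ⟩ := Finite.exists_min fun σ : Equiv.Perm n => f (σ.permMatrix R)
  refine ⟨σ, isMinOn_iff.2 fun M hM => ?_⟩
  rw [doublyStochastic_eq_convexHull_permMatrix] at hM
  obtain ⟨_, ⟨τ, rfl⟩, hτ⟩ := hf.exists_le_of_mem_convexHull
    (by rintro _ ⟨τ, rfl⟩; exact permMatrix_mem_doublyStochastic) hM
  exact (hσ τ).trans hτ

theorem assignmentPolytope_eq_doublyStochastic (m : ℕ) :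
    assignmentPolytope m = (doublyStochastic ℝ (Fin m) : Set (Matrix (Fin m) (Fin m) ℝ)) := by
  ext w
  change _ ↔ Matrix.of w ∈ doublyStochastic ℝ (Fin m)
  rw [mem_doublyStochastic_iff_sum]
  exact ⟨fun ⟨hrow, hcol, hnonneg⟩ => ⟨hnonneg, hrow, hcol⟩,
    fun ⟨hnonneg, hrow, hcol⟩ => ⟨hrow, hcol, hnonneg⟩⟩

theorem Equiv.Perm.permMatrix_eq_permMatrix_symm {m : ℕ} (σ : Equiv.Perm (Fin m)) :
    σ.permMatrix ℝ = _root_.permMatrix m σ.symm := by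
  ext i r
  simp [Equiv.Perm.permMatrix, PEquiv.toMatrix_apply, _root_.permMatrix, Equiv.eq_symm_apply]

theorem permMatrix_mem_assignmentPolytope (m : ℕ) (u : Equiv.Perm (Fin m)) :
    permMatrix m u ∈ assignmentPolytope m := by
  rw [assignmentPolytope_eq_doublyStochastic, ← Equiv.symm_symm u,
    ← Equiv.Perm.permMatrix_eq_permMatrix_symm]
  exact permMatrix_mem_doublyStochastic

section tourVec

variable {m : ℕ} (u : Equiv.Perm (Fin m))

theorem tourVec_nonneg (a b : Fin (m + 1)) : 0 ≤ tourVec m u a b := by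
  unfold tourVec; split_ifs <;> norm_num

theorem tourVec_zero_succ (i : Fin m) :
    tourVec m u 0 i.succ = if (u.symm i).val = 0 then 1 else 0 := by
  unfold tourVec
  congr 1
  simp [(Fin.succ_ne_zero _).symm, ← Equiv.symm_apply_eq]

theorem tourVec_succ_zero (i : Fin m) :
    tourVec m u i.succ 0 = if (u.symm i).val = m - 1 then 1 else 0 := by
  unfold tourVec
  congr 1
  simp [(Fin.succ_ne_zero _).symm, ← Equiv.symm_apply_eq]

theorem tourVec_succ_succ (i j : Fin m) :
    tourVec m u i.succ j.succ = if (u.symm j).val = (u.symm i).val + 1 then 1 else 0 := by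
  unfold tourVec
  congr 1
  simp [← Equiv.symm_apply_eq]

theorem tourVec_self (a : Fin (m + 1)) : tourVec m u a a = 0 := by
  cases a using Fin.cases with
  | zero =>
    unfold tourVec
    simp [(Fin.succ_ne_zero _).symm]
  | succ i => simp [tourVec_succ_succ]

end tourVec

theorem Fin.sum_sum_ite_val_eq_val_add_one {R : Type*} [AddCommMonoidWithOne R] (k : ℕ) :
    ∑ q : Fin (k + 1), ∑ q' : Fin (k + 1), (if q'.val = q.val + 1 then (1 : R) else 0) = k := by
  rw [Finset.sum_comm, Fin.sum_univ_succ]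
  have hsucc (p : Fin k) (q : Fin (k + 1)) : p.succ.val = q.val + 1 ↔ p.castSucc = q := by
    simp [Fin.ext_iff]
  simp only [hsucc, Fin.val_zero, Nat.zero_ne_add_one, if_false, Finset.sum_const_zero,
    Finset.sum_ite_eq, Finset.mem_univ, if_true, zero_add, Finset.sum_const, Finset.card_univ,
    Fintype.card_fin, nsmul_one]

theorem sum_tourVec_succ_succ {m : ℕ} (hm : 0 < m) (u : Equiv.Perm (Fin m)) :
    ∑ i : Fin m, ∑ j : Fin m, tourVec m u i.succ j.succ = (m : ℝ) - 1 := by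
  have hreindex : ∑ i : Fin m, ∑ j : Fin m, tourVec m u i.succ j.succ =
      ∑ q : Fin m, ∑ q' : Fin m, if q'.val = q.val + 1 then (1 : ℝ) else 0 := by
    simp only [tourVec_succ_succ]
    exact Fintype.sum_equiv u.symm _ _ fun i => Fintype.sum_equiv u.symm _ _ fun j => rfl
  obtain ⟨k, rfl⟩ := Nat.exists_eq_add_one_of_ne_zero hm.ne'
  rw [hreindex, Fin.sum_sum_ite_val_eq_val_add_one]
  push_cast
  ring

theorem permMatrix_tourVec_mem_Qbar1 {m : ℕ} (hm : 0 < m) (u : Equiv.Perm (Fin m)) :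
    (permMatrix m u, tourVec m u) ∈ Qbar1 m := by
  refine ⟨permMatrix_mem_assignmentPolytope m u, tourVec_self u, fun i r hr => ?_,
    fun i r hr => ?_, fun i j r r' _ hr => ?_, ?_, tourVec_nonneg u⟩
  · simp [tourVec_zero_succ, permMatrix, ← Equiv.symm_apply_eq, Fin.ext_iff, hr]
  · simp [tourVec_succ_zero, permMatrix, ← Equiv.symm_apply_eq, Fin.ext_iff, hr]
  · simp only [permMatrix, tourVec_succ_succ]
    split_ifs <;> simp_all
  · have hdiag (i j : Fin m) :
        (if i = j then 0 else tourVec m u i.succ j.succ) = tourVec m u i.succ j.succ := by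
      split_ifs with h
      · rw [h, tourVec_self]
      · rfl
    simp only [hdiag]
    exact sum_tourVec_succ_succ hm u

/-- For any cost matrix `c`, the minimum of
`Σ_{i,r} c_{ir} w_{ir}` over all `(w, y) ∈ Q̄₁` equals the minimum of
`Σ_{i,r} c_{ir} w_{ir}` over all `w ∈ 𝒜ₙ` (Problem `LP̄₁` and Problem `LAP`
have the same optimal objective value). -/
theorem Qbar1_LAP_same_optimal_value (n : ℕ) (hn : 3 ≤ n)
    (c : Fin (n - 1) → Fin (n - 1) → ℝ) :
    sInf {v : ℝ | ∃ p ∈ Qbar1 (n - 1), v = ∑ i, ∑ r, c i r * p.1 i r} =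
      sInf {v : ℝ | ∃ w ∈ assignmentPolytope (n - 1), v = ∑ i, ∑ r, c i r * w i r} := by
  set cost := fun w : Fin (n - 1) → Fin (n - 1) → ℝ => ∑ i, ∑ r, c i r * w i r
  obtain ⟨σ, hσ⟩ := ConcaveOn.exists_permMatrix_isMinOn
    ((IsLinearMap.mk' cost (isLinearMap_sum_sum_mul c)).concaveOn convex_doublyStochastic)
  replace hσ : IsMinOn cost (assignmentPolytope (n - 1)) (permMatrix _ σ.symm) := by
    rwa [Equiv.Perm.permMatrix_eq_permMatrix_symm, ← assignmentPolytope_eq_doublyStochastic] at hσ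
  have hQ : IsMinOn (fun p => cost p.1) (Qbar1 (n - 1)) (permMatrix _ σ.symm, tourVec _ σ.symm) :=
    isMinOn_iff.2 fun p hp => isMinOn_iff.1 hσ p.1 hp.1
  rw [hQ.csInf_setOf_exists_eq (permMatrix_tourVec_mem_Qbar1 (by omega) σ.symm),
    hσ.csInf_setOf_exists_eq (permMatrix_mem_assignmentPolytope _ σ.symm)]
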